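/- arXiv:2504.12910 — 4 statements merged into one kernel-verified Lean document; each statement's English description precedes it below -/
import Mathlib

section
/- Let k be an algebraically closed field of characteristic p > 0, let n ≥ 1 and 1 ≤ q ≤ n, and let e ≥ q be an integer with e ≤ q·p. If ω is a homogeneous polynomial q-form of degree e on affine (n+1)-space over k which is projective and closed, then ω is exact. -/
open MvPolynomial

/-- An alternating family of polynomial coefficients, i.e. a homogeneous polynomial
`q`-form on affine `N`-space: antisymmetric under permutations of the indices and
vanishing when two indices coincide. -/
def IsAltFamily {k : Type*} [CommRing k] {N q : ℕ}
    (b : (Fin q → Fin N) → MvPolynomial (Fin N) k) : Prop :=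
  (∀ (σ : Equiv.Perm (Fin q)) (i : Fin q → Fin N),
      b (i ∘ σ) = (Equiv.Perm.sign σ : ℤ) • b i) ∧
  ∀ i : Fin q → Fin N, ¬ Function.Injective i → b i = 0

/-- The exterior derivative of a polynomial `q`-form, as a `(q+1)`-form. -/
noncomputable def extD {k : Type*} [CommRing k] {N q : ℕ}
    (b : (Fin q → Fin N) → MvPolynomial (Fin N) k)
    (j : Fin (q + 1) → Fin N) : MvPolynomial (Fin N) k :=
  ∑ t : Fin (q + 1),
    (-1 : MvPolynomial (Fin N) k) ^ (t : ℕ) * pderiv (j t) (b (j ∘ t.succAbove))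

/-- A `q`-form (with `q = m+1`) is projective if its contraction with the radial
vector field `R = Σ x_l ∂/∂x_l` vanishes. -/
def IsProjectiveForm {k : Type*} [CommRing k] {N m : ℕ}
    (b : (Fin (m + 1) → Fin N) → MvPolynomial (Fin N) k) : Prop :=
  ∀ i : Fin m → Fin N, ∑ l : Fin N, X l * b (Fin.cons l i) = 0

/-- Plücker conditions: local decomposability of a `q`-form (`q = m+1`). -/
def IsLocDecForm {k : Type*} [CommRing k] {N m : ℕ}
    (b : (Fin (m + 1) → Fin N) → MvPolynomial (Fin N) k) : Prop :=
  ∀ (i : Fin m → Fin N) (j : Fin (m + 2) → Fin N),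
    ∑ t : Fin (m + 2), (-1 : MvPolynomial (Fin N) k) ^ (t : ℕ) *
      (b (Fin.snoc i (j t)) * b (j ∘ t.succAbove)) = 0

/-- Integrability of a `q`-form (`q = m+1`): local decomposability together with the
Frobenius-type conditions involving the exterior derivative. -/
def IsIntegrableForm {k : Type*} [CommRing k] {N m : ℕ}
    (b : (Fin (m + 1) → Fin N) → MvPolynomial (Fin N) k) : Prop :=
  IsLocDecForm b ∧
  ∀ (i : Fin m → Fin N) (j : Fin (m + 3) → Fin N),
    ∑ t : Fin (m + 3), (-1 : MvPolynomial (Fin N) k) ^ (t : ℕ) *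
      (b (Fin.snoc i (j t)) * extD b (j ∘ t.succAbove)) = 0

/-- The linear form `ℓ_λ = Σ λ_v x_v` associated with a covector `λ ∈ k^N`. -/
noncomputable def linForm {k : Type*} [CommRing k] {N : ℕ} (lam : Fin N → k) :
    MvPolynomial (Fin N) k :=
  ∑ v : Fin N, C (lam v) * X v


/-!
Grade `k[x]` by exponents mod `p`, and give `x^d dx_j` the weight `d + (multiplicities of j)`
in `(ZMod p)^N`. The Lie derivative along `x_l ∂/∂x_l` acts on the weight-`β` component `ω_β`
as multiplication by `β_l`, so for closed `ω` Cartan's formula gives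
`ω_β = β_l⁻¹ · d(ι_{x_l ∂/∂x_l} ω_β)` as soon as `β_l ≠ 0`.
The weight-`0` component vanishes: a monomial `x^d dx_j` in it has `d_l ≡ -1 (mod p)` at the
`m + 1` entries of `j`, so the degree bound `e - (m+1) ≤ (m+1)(p-1)` forces `d` to be supported
on the entries of `j`, and then the coefficient of `x^d x_{j_0} dx_{j_1…j_m}` in `ι_R ω = 0` is
exactly the coefficient of `x^d dx_j` in `ω`.
-/
open Finset

section ResidueGrading

variable {k : Type*} [CommRing k] {N : ℕ} (p : ℕ)

def residueWeight (l : Fin N) : Fin N → ZMod p := Pi.single l 1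

lemma weight_residueWeight_apply (d : Fin N →₀ ℕ) (l : Fin N) :
    Finsupp.weight (residueWeight p) d l = d l := by
  classical
  simp [Finsupp.weight_eq_sum, residueWeight, Finset.sum_apply, Pi.single_apply]

/-- The component of `f` made of the monomials `x^d` with `d ≡ γ` coordinatewise mod `p`. -/
noncomputable abbrev residueComponent (γ : Fin N → ZMod p) :
    MvPolynomial (Fin N) k →ₗ[k] MvPolynomial (Fin N) k :=
  weightedHomogeneousComponent (residueWeight p) γ

lemma sum_residueComponent_sub [NeZero p] (δ : Fin N → ZMod p) (f : MvPolynomial (Fin N) k) :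
    ∑ β, residueComponent p (β - δ) f = f := by
  rw [← finsum_eq_sum_of_fintype]
  exact (finsum_comp_equiv (Equiv.subRight δ) (f := fun γ => residueComponent p γ f)).trans
    (sum_weightedHomogeneousComponent _ f)

lemma pderiv_residueComponent (γ : Fin N → ZMod p) (l : Fin N) (f : MvPolynomial (Fin N) k) :
    pderiv l (residueComponent p γ f) =
      residueComponent p (γ - residueWeight p l) (pderiv l f) := by
  classical
  ext d
  simp only [coeff_pderiv, coeff_weightedHomogeneousComponent, map_add, Finsupp.weight_single,
    one_smul, eq_sub_iff_add_eq, ite_mul, zero_mul]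

lemma MvPolynomial.IsHomogeneous.residueComponent {f : MvPolynomial (Fin N) k} {D : ℕ}
    (hf : f.IsHomogeneous D) (γ : Fin N → ZMod p) :
    (residueComponent p γ f).IsHomogeneous D := by
  classical
  intro d hd
  rw [coeff_weightedHomogeneousComponent] at hd
  split_ifs at hd
  · exact hf hd
  · exact absurd rfl hd

end ResidueGrading

lemma coeff_X_mul_pderiv {k σ : Type*} [CommRing k] (l : σ) (f : MvPolynomial σ k)
    (d : σ →₀ ℕ) : coeff d (X l * pderiv l f) = d l * coeff d f := by
  induction f using MvPolynomial.induction_on' with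
  | monomial u a =>
    classical
    rw [X_mul_pderiv_monomial, coeff_smul, coeff_monomial]
    split_ifs with h <;> simp [h]
  | add f g hf hg => simp only [map_add, mul_add, coeff_add, hf, hg]

abbrev PolyForm (k : Type*) [CommRing k] (N q : ℕ) := (Fin q → Fin N) → MvPolynomial (Fin N) k

section Forms

variable {k : Type*} [CommRing k] {N q : ℕ}

lemma extD_sum {ι : Type*} (s : Finset ι) (g : ι → PolyForm k N q) (j : Fin (q + 1) → Fin N) :
    extD (∑ β ∈ s, g β) j = ∑ β ∈ s, extD (g β) j := by
  simp only [extD, Finset.sum_apply, map_sum, mul_sum]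
  exact sum_comm

lemma extD_smul (a : k) (b : PolyForm k N q) (j : Fin (q + 1) → Fin N) :
    extD (a • b) j = a • extD b j := by
  simp only [extD, Pi.smul_apply, Derivation.map_smul, mul_smul_comm, smul_sum]

lemma IsAltFamily.sum {ι : Type*} {s : Finset ι} {g : ι → PolyForm k N q}
    (hg : ∀ β ∈ s, IsAltFamily (g β)) : IsAltFamily (∑ β ∈ s, g β) := by
  refine ⟨fun σ i => ?_, fun i hi => ?_⟩
  · simp only [Finset.sum_apply, smul_sum]
    exact sum_congr rfl fun β hβ => (hg β hβ).1 σ i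
  · simp only [Finset.sum_apply]
    exact sum_eq_zero fun β hβ => (hg β hβ).2 i hi

lemma IsAltFamily.smul {b : PolyForm k N q} (hb : IsAltFamily b) (a : k) :
    IsAltFamily (a • b) :=
  ⟨fun σ i => by simp only [Pi.smul_apply, hb.1 σ i, smul_comm a],
    fun i hi => by simp only [Pi.smul_apply, hb.2 i hi, smul_zero]⟩

lemma IsAltFamily.apply_cons_succAbove {b : PolyForm k N (q + 1)} (hb : IsAltFamily b)
    (j : Fin (q + 1) → Fin N) (t : Fin (q + 1)) :
    b (Fin.cons (j t) (j ∘ t.succAbove)) = (-1) ^ (t : ℕ) * b j := by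
  have hcycle : Fin.cons (j t) (j ∘ t.succAbove) = j ∘ (t.cycleRange.symm : Equiv.Perm _) := by
    funext s
    cases s using Fin.cases with
    | zero => simp [Fin.cycleRange_symm_zero]
    | succ u => simp [Fin.cycleRange_symm_succ]
  rw [hcycle, hb.1, Equiv.Perm.sign_symm, Fin.sign_cycleRange, zsmul_eq_mul]
  push_cast
  ring

end Forms

section Components

variable {k : Type*} [CommRing k] {N q : ℕ} (p : ℕ)

def tupleWeight (j : Fin q → Fin N) : Fin N → ZMod p := ∑ t, residueWeight p (j t)

lemma tupleWeight_apply (j : Fin q → Fin N) (l : Fin N) :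
    tupleWeight p j l = #{t | j t = l} := by
  classical
  simp [tupleWeight, residueWeight, Finset.sum_apply, Pi.single_apply, eq_comm (a := l)]

lemma tupleWeight_comp_perm (j : Fin q → Fin N) (σ : Equiv.Perm (Fin q)) :
    tupleWeight p (j ∘ σ) = tupleWeight p j :=
  Equiv.sum_comp σ fun t => residueWeight p (j t)

lemma tupleWeight_eq_add_succAbove (j : Fin (q + 1) → Fin N) (t : Fin (q + 1)) :
    tupleWeight p j = residueWeight p (j t) + tupleWeight p (j ∘ t.succAbove) :=
  Fin.sum_univ_succAbove _ t

/-- The component of weight `β` of `Σ b_j dx_j`, where `x^d dx_j` has weight `d` plus the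
multiplicity vector of `j`, both mod `p`. -/
noncomputable def formComponent (β : Fin N → ZMod p) (b : PolyForm k N q) (j : Fin q → Fin N) :
    MvPolynomial (Fin N) k :=
  residueComponent p (β - tupleWeight p j) (b j)

lemma sum_formComponent [NeZero p] (b : PolyForm k N q) (j : Fin q → Fin N) :
    ∑ β, formComponent p β b j = b j :=
  sum_residueComponent_sub p _ _

lemma IsAltFamily.formComponent {b : PolyForm k N q} (hb : IsAltFamily b)
    (β : Fin N → ZMod p) : IsAltFamily (formComponent p β b) :=
  ⟨fun σ i => by simp only [_root_.formComponent, tupleWeight_comp_perm, hb.1, map_zsmul],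
    fun i hi => by simp only [_root_.formComponent, hb.2 i hi, map_zero]⟩

lemma extD_formComponent (β : Fin N → ZMod p) (b : PolyForm k N q) (j : Fin (q + 1) → Fin N) :
    extD (formComponent p β b) j = formComponent p β (extD b) j := by
  simp only [extD, formComponent, map_sum]
  refine sum_congr rfl fun t _ => ?_
  rw [pderiv_residueComponent, tupleWeight_eq_add_succAbove p j t, sub_sub,
    add_comm (tupleWeight p _)]
  rcases neg_one_pow_eq_or (MvPolynomial (Fin N) k) t with h | h <;> simp [h]

end Components

section Scaling

variable {k : Type*} [CommRing k] {N q : ℕ}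

/-- The contraction `ι_{x_l ∂/∂x_l}`. -/
noncomputable def interiorScaling (l : Fin N) (b : PolyForm k N (q + 1)) (i : Fin q → Fin N) :
    MvPolynomial (Fin N) k :=
  X l * b (Fin.cons l i)

/-- The Lie derivative `L_{x_l ∂/∂x_l}`; the count comes from `L_{x_l ∂/∂x_l} dx_l = dx_l`. -/
noncomputable def lieScaling (l : Fin N) (b : PolyForm k N q) (j : Fin q → Fin N) :
    MvPolynomial (Fin N) k :=
  X l * pderiv l (b j) + #{t | j t = l} • b j

lemma IsAltFamily.interiorScaling {b : PolyForm k N (q + 1)} (hb : IsAltFamily b) (l : Fin N) :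
    IsAltFamily (interiorScaling l b) := by
  refine ⟨fun σ i => ?_, fun i hi => ?_⟩
  · have hperm : Fin.cons l (i ∘ σ) = Fin.cons l i ∘ Equiv.Perm.decomposeFin.symm (0, σ) := by
      funext s
      cases s using Fin.cases with
      | zero => simp [Equiv.Perm.decomposeFin_symm_apply_zero]
      | succ u => simp [Equiv.Perm.decomposeFin_symm_apply_succ, Equiv.swap_self]
    rw [_root_.interiorScaling, _root_.interiorScaling, hperm, hb.1,
      Equiv.Perm.decomposeFin.symm_sign, if_pos rfl, one_mul, mul_smul_comm]
  · rw [_root_.interiorScaling, hb.2 _ fun h => hi (Fin.cons_injective_iff.mp h).2, mul_zero]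

lemma MvPolynomial.IsHomogeneous.interiorScaling {b : PolyForm k N (q + 1)} {D : ℕ}
    (hb : ∀ j, (b j).IsHomogeneous D) (l : Fin N) (i : Fin q → Fin N) :
    (interiorScaling l b i).IsHomogeneous (D + 1) := by
  rw [add_comm]
  exact (isHomogeneous_X k l).mul (hb _)

/-- Cartan's formula `d ι + ι d = L`. -/
theorem extD_interiorScaling_add {b : PolyForm k N (q + 1)} (hb : IsAltFamily b) (l : Fin N)
    (j : Fin (q + 1) → Fin N) :
    extD (interiorScaling l b) j + interiorScaling l (extD b) j = lieScaling l b j := by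
  classical
  have hX : ∀ t : Fin (q + 1),
      (-1) ^ (t : ℕ) * (pderiv (j t) (X l) * b (Fin.cons l (j ∘ t.succAbove))) =
        if j t = l then b j else 0 := by
    intro t
    split_ifs with h
    · rw [← h, pderiv_X_self, one_mul, hb.apply_cons_succAbove, ← mul_assoc, ← mul_pow]
      simp
    · rw [pderiv_X_of_ne (Ne.symm h), zero_mul, mul_zero]
  have hcons : ∀ t : Fin (q + 1),
      (Fin.cons l j : Fin (q + 2) → Fin N) ∘ t.succ.succAbove = Fin.cons l (j ∘ t.succAbove) :=
    Fin.cons_comp_succ_succAbove l j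
  have hcancel : ∑ t : Fin (q + 1),
      ((-1) ^ (t : ℕ) * (X l * pderiv (j t) (b (Fin.cons l (j ∘ t.succAbove)))) +
        X l * ((-1) ^ (t.succ : ℕ) * pderiv (j t) (b (Fin.cons l (j ∘ t.succAbove))))) = 0 :=
    sum_eq_zero fun t _ => by rw [Fin.val_succ, pow_succ]; ring
  rw [sum_add_distrib] at hcancel
  simp only [extD, interiorScaling, lieScaling, Fin.sum_univ_succ (n := q + 1), Fin.cons_zero,
    Fin.cons_succ, Fin.succAbove_zero, Fin.cons_comp_succ, hcons, pderiv_mul, mul_add,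
    sum_add_distrib, hX, sum_ite, sum_const_zero, sum_const, mul_sum]
  rw [Fin.val_zero, pow_zero, one_mul]
  linear_combination hcancel

end Scaling

section Homotopy

variable {k : Type*} [CommRing k] {N q : ℕ} (p : ℕ) [CharP k p]

theorem lieScaling_formComponent (β : Fin N → ZMod p) (b : PolyForm k N q) (l : Fin N)
    (j : Fin q → Fin N) :
    lieScaling l (formComponent p β b) j =
      ZMod.castHom (dvd_refl p) k (β l) • formComponent p β b j := by
  classical
  ext d
  simp only [lieScaling, formComponent, coeff_add, coeff_X_mul_pderiv, coeff_smul,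
    coeff_weightedHomogeneousComponent]
  split_ifs with hw
  · have hβ : β l = d l + #{t | j t = l} := by
      have := congrFun hw l
      rw [weight_residueWeight_apply, Pi.sub_apply, tupleWeight_apply] at this
      rw [this, sub_add_cancel]
    rw [hβ, map_add, map_natCast, map_natCast, smul_eq_mul, nsmul_eq_mul]
    ring
  · simp

theorem extD_interiorScaling_formComponent {b : PolyForm k N (q + 1)} (hb : IsAltFamily b)
    (hclosed : ∀ j, extD b j = 0) (β : Fin N → ZMod p) (l : Fin N) (j : Fin (q + 1) → Fin N) :
    extD (interiorScaling l (formComponent p β b)) j =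
      ZMod.castHom (dvd_refl p) k (β l) • formComponent p β b j := by
  have hclosedβ : interiorScaling l (extD (formComponent p β b)) j = 0 := by
    simp only [interiorScaling, extD_formComponent, formComponent, hclosed, map_zero, mul_zero]
  rw [← lieScaling_formComponent, ← extD_interiorScaling_add (hb.formComponent p β), hclosedβ,
    add_zero]

end Homotopy

section WeightZero

lemma eq_zero_of_sum_le_card_mul {ι : Type*} [Fintype ι] {S : Finset ι} {d : ι → ℕ} {c : ℕ}
    (hS : ∀ l ∈ S, c ≤ d l) (hsum : ∑ l, d l ≤ #S * c) {l : ι} (hl : l ∉ S) :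
    d l = 0 := by
  classical
  have hle : #S * c ≤ ∑ l ∈ S, d l := by simpa using card_nsmul_le_sum S d c hS
  have hsplit := sum_add_sum_compl S d
  have hcompl : ∑ l ∈ Sᶜ, d l = 0 := by omega
  exact sum_eq_zero_iff.mp hcompl l (mem_compl.mpr hl)

variable {k : Type*} [CommRing k] {N m : ℕ}

theorem coeff_eq_zero_of_isProjectiveForm {b : PolyForm k N (m + 1)} (halt : IsAltFamily b)
    (hproj : IsProjectiveForm b) {j : Fin (m + 1) → Fin N} {d : Fin N →₀ ℕ}
    (hd : ∀ l ∉ Set.range j, d l = 0) : coeff d (b j) = 0 := by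
  classical
  have h := congrArg (coeff (d + Finsupp.single (j 0) 1)) (hproj (Fin.tail j))
  rw [coeff_sum, coeff_zero, sum_eq_single (j 0), add_comm d, coeff_X_mul,
    Fin.cons_self_tail] at h
  · exact h
  · intro l _ hl0
    by_cases hr : l ∈ Set.range (Fin.tail j)
    · rw [halt.2 _ fun hinj => (Fin.cons_injective_iff.mp hinj).1 hr, mul_zero, coeff_zero]
    · have hl : l ∉ Set.range j := by
        rw [← Fin.cons_self_tail j, Fin.range_cons]
        simp [hl0, hr]
      rw [coeff_X_mul', if_neg]
      simp [hd l hl, Ne.symm hl0]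
  · simp

theorem formComponent_zero_eq_zero (p : ℕ) {b : PolyForm k N (m + 1)} (halt : IsAltFamily b)
    (hproj : IsProjectiveForm b) {D : ℕ} (hhom : ∀ j, (b j).IsHomogeneous D)
    (hD : D ≤ (m + 1) * (p - 1)) : formComponent p 0 b = 0 := by
  classical
  funext j
  ext d
  rw [formComponent, coeff_weightedHomogeneousComponent, Pi.zero_apply, coeff_zero]
  split_ifs with hw
  swap
  · rfl
  by_cases hj : Function.Injective j
  swap
  · rw [halt.2 j hj, coeff_zero]
  by_contra hd
  refine hd (coeff_eq_zero_of_isProjectiveForm halt hproj fun l hl => ?_)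
  refine eq_zero_of_sum_le_card_mul (S := univ.image j) (c := p - 1) ?_ ?_ (by simpa using hl)
  · intro l hl
    obtain ⟨t, -, rfl⟩ := mem_image.mp hl
    have hdvd : p ∣ d (j t) + 1 := by
      rw [← ZMod.natCast_eq_zero_iff]
      have := congrFun hw (j t)
      rw [weight_residueWeight_apply, Pi.sub_apply, Pi.zero_apply, zero_sub,
        tupleWeight_apply] at this
      simp [hj.eq_iff, filter_eq'] at this
      push_cast
      rw [this, neg_add_cancel]
    have := Nat.le_of_dvd (Nat.succ_pos _) hdvd
    omega
  · rw [card_image_of_injective _ hj, card_univ, Fintype.card_fin, ← Finsupp.degree_eq_sum,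
      Finsupp.degree_eq_weight_one]
    exact (hhom j hd).trans_le hD

end WeightZero

theorem stmt_1_general {k : Type*} [Field k] (p : ℕ) [CharP k p] (hp : 0 < p)
    (n m e : ℕ) (he' : e ≤ (m + 1) * p)
    (b : (Fin (m + 1) → Fin (n + 1)) → MvPolynomial (Fin (n + 1)) k)
    (halt : IsAltFamily b)
    (hhom : ∀ i, (b i).IsHomogeneous (e - (m + 1)))
    (hproj : IsProjectiveForm b)
    (hclosed : ∀ j : Fin (m + 1 + 1) → Fin (n + 1), extD b j = 0) :
    ∃ c : (Fin m → Fin (n + 1)) → MvPolynomial (Fin (n + 1)) k,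
      IsAltFamily c ∧ (∀ i, (c i).IsHomogeneous (e - (m + 1) + 1)) ∧
      ∀ j : Fin (m + 1) → Fin (n + 1), extD c j = b j := by
  have : NeZero p := ⟨hp.ne'⟩
  set φ := ZMod.castHom (dvd_refl p) k
  have hzero : formComponent p 0 b = 0 := formComponent_zero_eq_zero p halt hproj hhom
    (by rw [Nat.mul_sub_one]; exact Nat.sub_le_sub_right he' _)
  have hpivot : ∀ β : Fin (n + 1) → ZMod p, ∃ l, β ≠ 0 → β l ≠ 0 := fun β => by
    by_cases hβ : β = 0
    · exact ⟨0, fun h => (h hβ).elim⟩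
    · obtain ⟨l, hl⟩ := Function.ne_iff.mp hβ
      exact ⟨l, fun _ => hl⟩
  choose piv hpiv using hpivot
  refine ⟨∑ β, (φ (β (piv β)))⁻¹ • interiorScaling (piv β) (formComponent p β b),
    IsAltFamily.sum fun β _ => ((halt.formComponent p β).interiorScaling _).smul _,
    fun i => ?_, fun j => ?_⟩
  · simp only [Finset.sum_apply, Pi.smul_apply, smul_eq_C_mul]
    exact IsHomogeneous.sum _ _ _ fun β _ =>
      (IsHomogeneous.interiorScaling (fun j => (hhom j).residueComponent p _) _ i).C_mul _
  · rw [extD_sum, ← sum_formComponent p b j]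
    refine Finset.sum_congr rfl fun β _ => ?_
    rw [extD_smul, extD_interiorScaling_formComponent p halt hclosed, smul_smul]
    by_cases hβ : β = 0
    · simp [hβ, hzero]
    · rw [inv_mul_cancel₀ ((map_ne_zero_iff _ (ZMod.castHom_injective k)).mpr (hpiv β hβ)),
        one_smul]

/-- Over an algebraically closed field of characteristic `p > 0`, a projective
closed homogeneous polynomial `q`-form of degree `e` (here `q = m + 1`, `1 ≤ q ≤ n`,
`q ≤ e ≤ q·p`) on affine `(n+1)`-space is exact. -/
theorem stmt_1 {k : Type*} [Field k] [IsAlgClosed k] (p : ℕ) [CharP k p] (hp : 0 < p)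
    (n m e : ℕ) (hn : 1 ≤ n) (hq : m + 1 ≤ n) (he : m + 1 ≤ e) (he' : e ≤ (m + 1) * p)
    (b : (Fin (m + 1) → Fin (n + 1)) → MvPolynomial (Fin (n + 1)) k)
    (halt : IsAltFamily b)
    (hhom : ∀ i, (b i).IsHomogeneous (e - (m + 1)))
    (hproj : IsProjectiveForm b)
    (hclosed : ∀ j : Fin (m + 1 + 1) → Fin (n + 1), extD b j = 0) :
    ∃ c : (Fin m → Fin (n + 1)) → MvPolynomial (Fin (n + 1)) k,
      IsAltFamily c ∧ (∀ i, (c i).IsHomogeneous (e - (m + 1) + 1)) ∧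
      ∀ j : Fin (m + 1) → Fin (n + 1), extD c j = b j :=
  stmt_1_general p hp n m e he' b halt hhom hproj hclosed
end

section
/- (Degree zero foliations in characteristic two.) Let k be an algebraically closed field of characteristic 2 and let n ≥ 1. Let ω = Σ_i a_i dx_i be a homogeneous polynomial 1-form of degree 2 on affine (n+1)-space over k (each a_i homogeneous of degree 1) which is projective, i.e. Σ_i x_i·a_i = 0. Then there exists a homogeneous polynomial f ∈ k[x_0,…,x_n] of degree 2 with a_i = ∂f/∂x_i for all i; in particular ω is closed (and hence integrable). -/
/-!
Each `aᵢ` is a linear form `∑ⱼ cᵢⱼ Xⱼ` (Euler's identity), so projectivity says that the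
quadratic polynomial `∑ᵢ Xᵢ aᵢ` of the matrix `c` vanishes; hence the bilinear form of `c` is
alternating, which in characteristic `2` means `c` is symmetric with zero diagonal. Then
`f = ∑_{i<j} cᵢⱼ Xᵢ Xⱼ` is a potential, and `∂ⱼ aᵢ = cᵢⱼ` gives closedness.
-/

open MvPolynomial

namespace MvPolynomial

variable {σ R : Type*}

section CommSemiring

variable [CommSemiring R] {p : MvPolynomial σ R}

theorem IsHomogeneous.eq_C_coeff_zero (h : p.IsHomogeneous 0) : p = C (coeff 0 p) :=
  totalDegree_eq_zero_iff_eq_C.mp ((totalDegree_zero_iff_isHomogeneous σ).mpr h)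

theorem IsHomogeneous.pderiv_eq_C (h : p.IsHomogeneous 1) (i : σ) :
    pderiv i p = C (coeff 0 (pderiv i p)) :=
  (h.pderiv (i := i)).eq_C_coeff_zero

theorem IsHomogeneous.eq_sum_C_mul_X [Fintype σ] (h : p.IsHomogeneous 1) :
    p = ∑ i, C (coeff 0 (pderiv i p)) * X i :=
  calc p = ∑ i, X i * pderiv i p := by rw [h.sum_X_mul_pderiv, one_smul]
    _ = ∑ i, C (coeff 0 (pderiv i p)) * X i :=
      Finset.sum_congr rfl fun i _ => by rw [h.pderiv_eq_C i, coeff_zero_C, mul_comm]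

variable [Fintype σ]

noncomputable def quadraticOfMatrix (u : Matrix σ σ R) : MvPolynomial σ R :=
  ∑ i, X i * ∑ j, C (u i j) * X j

theorem isHomogeneous_quadraticOfMatrix (u : Matrix σ σ R) :
    (quadraticOfMatrix u).IsHomogeneous 2 :=
  IsHomogeneous.sum _ _ _ fun i _ => (isHomogeneous_X R i).mul <|
    IsHomogeneous.sum _ _ _ fun j _ => isHomogeneous_C_mul_X (u i j) j

variable [DecidableEq σ]

theorem pderiv_quadraticOfMatrix (u : Matrix σ σ R) (r : σ) :
    pderiv r (quadraticOfMatrix u) = ∑ j, C (u r j + u j r) * X j := by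
  simp only [quadraticOfMatrix, map_sum, Derivation.leibniz, pderiv_X, smul_eq_mul, map_add,
    add_mul]
  simp [Pi.single_apply, Finset.sum_add_distrib, mul_comm, add_comm]

theorem eval_quadraticOfMatrix (u : Matrix σ σ R) (x : σ → R) :
    eval x (quadraticOfMatrix u) = Matrix.toBilin' u x x := by
  simp [quadraticOfMatrix, Matrix.toBilin'_apply', dotProduct, Matrix.mulVec]

end CommSemiring

theorem isAlt_toBilin'_of_quadraticOfMatrix_eq_zero [CommRing R] [Fintype σ] [DecidableEq σ]
    {u : Matrix σ σ R} (h : quadraticOfMatrix u = 0) : (Matrix.toBilin' u).IsAlt := fun x => by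
  rw [← eval_quadraticOfMatrix, h, map_zero]

end MvPolynomial

theorem stmt_6_general {k : Type*} [Field k] [CharP k 2]
    (n : ℕ)
    (a : Fin (n + 1) → MvPolynomial (Fin (n + 1)) k)
    (hhom : ∀ i, (a i).IsHomogeneous 1)
    (hproj : ∑ i : Fin (n + 1), X i * a i = 0) :
    ∃ f : MvPolynomial (Fin (n + 1)) k, f.IsHomogeneous 2 ∧
      (∀ i, a i = pderiv i f) ∧
      ∀ i j, pderiv j (a i) = pderiv i (a j) := by
  set c : Matrix (Fin (n + 1)) (Fin (n + 1)) k := fun i j => coeff 0 (pderiv j (a i))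
  have hlin : ∀ i, a i = ∑ j, C (c i j) * X j := fun i => (hhom i).eq_sum_C_mul_X
  have halt : (Matrix.toBilin' c).IsAlt := by
    refine isAlt_toBilin'_of_quadraticOfMatrix_eq_zero ?_
    rw [← hproj, quadraticOfMatrix]
    simp only [← hlin]
  have hsymm : ∀ i j, c i j = c j i := fun i j => by
    simpa [CharTwo.neg_eq] using LinearMap.IsAlt.neg halt (Pi.single i 1) (Pi.single j 1)
  have hdiag : ∀ i, c i i = 0 := fun i => by
    simpa using halt.self_eq_zero (Pi.single i 1)
  let u : Matrix (Fin (n + 1)) (Fin (n + 1)) k := fun i j => if i < j then c i j else 0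
  refine ⟨quadraticOfMatrix u, isHomogeneous_quadraticOfMatrix u, fun r => ?_, fun i j => ?_⟩
  · rw [pderiv_quadraticOfMatrix, hlin r]
    refine Finset.sum_congr rfl fun j _ => ?_
    rcases lt_trichotomy r j with h | rfl | h
    · simp [u, h, lt_asymm h]
    · simp [u, hdiag]
    · simp [u, h, lt_asymm h, hsymm r j]
  · rw [(hhom i).pderiv_eq_C, (hhom j).pderiv_eq_C]
    exact congrArg C (hsymm i j)

/-- Degree zero foliations in characteristic two. Over an algebraically
closed field of characteristic `2`, every projective homogeneous polynomial `1`-form of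
degree `2` on affine `(n+1)`-space is exact: `ω = df` with `f` homogeneous quadratic;
in particular `ω` is closed (and hence integrable). -/
theorem stmt_6 {k : Type*} [Field k] [IsAlgClosed k] [CharP k 2]
    (n : ℕ) (hn : 1 ≤ n)
    (a : Fin (n + 1) → MvPolynomial (Fin (n + 1)) k)
    (hhom : ∀ i, (a i).IsHomogeneous 1)
    (hproj : ∑ i : Fin (n + 1), X i * a i = 0) :
    ∃ f : MvPolynomial (Fin (n + 1)) k, f.IsHomogeneous 2 ∧
      (∀ i, a i = pderiv i f) ∧
      ∀ i j, pderiv j (a i) = pderiv i (a j) :=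
  stmt_6_general n a hhom hproj
end

section
/- Let k be an algebraically closed field of characteristic p > 0, let n ≥ 1 and e ≥ 1 be integers with p·e ≥ 3, and let F = Σ_{i=1}^{n} x_{i−1}·x_i^{pe−1} ∈ k[x_0,…,x_n]. Then for a point x = (x_0,…,x_n) ∈ k^{n+1}, all the partial derivatives ∂F/∂x_j (j = 0,…,n) vanish at x if and only if x_1 = x_2 = … = x_n = 0. In other words, the zero locus of the differential dF is exactly the line {x_1 = … = x_n = 0} through the origin of affine (n+1)-space. -/
/-!
Write `m = pe - 1 ≥ 2`. The partial derivative of `F` with respect to `x_j` is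
`x_{j+1}^m + m x_{j-1} x_j^{m-1}` (the first term only for `j < n`, the second only for `j > 0`).
If `x_j = 0` or `j = 0`, the second term vanishes, so `∂F/∂x_j = 0` forces `x_{j+1} = 0`;
induction on `j` gives `x_1 = ⋯ = x_n = 0`. Conversely every term of every partial derivative
contains a positive power of some `x_i` with `i ≥ 1`.
-/

open MvPolynomial

namespace MvPolynomial

variable {R : Type*} [CommRing R]

lemma eval_pderiv_X_mul_X_pow {σ : Type*} [DecidableEq σ] (x : σ → R) (j a b : σ) (m : ℕ) :
    eval x (pderiv j (X a * X b ^ m : MvPolynomial σ R)) =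
      (if a = j then x b ^ m else 0) + if b = j then m * x a * x b ^ (m - 1) else 0 := by
  rw [pderiv_mul, pderiv_pow, pderiv_X, pderiv_X]
  by_cases ha : a = j <;> by_cases hb : b = j <;>
    simp [ha, hb, mul_comm, mul_assoc]

variable (R) in
noncomputable def chainPoly (n m : ℕ) : MvPolynomial (Fin (n + 1)) R :=
  ∑ i : Fin n, X i.castSucc * X i.succ ^ m

variable {n m : ℕ} (x : Fin (n + 1) → R)

lemma eval_pderiv_chainPoly (j : Fin (n + 1)) :
    eval x (pderiv j (chainPoly R n m)) =
      (∑ i : Fin n, if i.castSucc = j then x i.succ ^ m else 0) +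
        ∑ i : Fin n, if i.succ = j then m * x i.castSucc * x i.succ ^ (m - 1) else 0 := by
  simp only [chainPoly, map_sum, eval_pderiv_X_mul_X_pow, Finset.sum_add_distrib]

lemma eval_pderiv_castSucc_chainPoly (hm : 2 ≤ m) (i : Fin n)
    (hx : i.castSucc ≠ 0 → x i.castSucc = 0) :
    eval x (pderiv i.castSucc (chainPoly R n m)) = x i.succ ^ m := by
  have h_succ_term : ∀ i' : Fin n,
      (if i'.succ = i.castSucc then m * x i'.castSucc * x i'.succ ^ (m - 1) else 0) = 0 := by
    intro i'
    split_ifs with h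
    · rw [h, hx (h ▸ Fin.succ_ne_zero i'), zero_pow (by omega), mul_zero]
    · rfl
  simp only [eval_pderiv_chainPoly, Fin.castSucc_inj, h_succ_term, Finset.sum_const_zero,
    add_zero, Finset.sum_ite_eq', Finset.mem_univ, if_true]

lemma eval_pderiv_chainPoly_eq_zero (hm : 2 ≤ m) (hx : ∀ i : Fin (n + 1), i ≠ 0 → x i = 0)
    (j : Fin (n + 1)) : eval x (pderiv j (chainPoly R n m)) = 0 := by
  have hx_succ : ∀ i : Fin n, x i.succ = 0 := fun i => hx _ (Fin.succ_ne_zero i)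
  simp [eval_pderiv_chainPoly, hx_succ, zero_pow (show m ≠ 0 by omega),
    zero_pow (show m - 1 ≠ 0 by omega)]

theorem eval_pderiv_chainPoly_eq_zero_iff [IsReduced R] (hm : 2 ≤ m) :
    (∀ j, eval x (pderiv j (chainPoly R n m)) = 0) ↔ ∀ i : Fin (n + 1), i ≠ 0 → x i = 0 := by
  refine ⟨fun h j => ?_, eval_pderiv_chainPoly_eq_zero x hm⟩
  induction j using Fin.induction with
  | zero => exact absurd rfl
  | succ i ih =>
    intro _
    have hpow : x i.succ ^ m = 0 := by
      rw [← eval_pderiv_castSucc_chainPoly x hm i ih, h]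
    exact IsReduced.eq_zero _ ⟨m, hpow⟩

end MvPolynomial

theorem stmt_8_general {k : Type*} [Field k] (p : ℕ)
    (n e : ℕ) (hpe : 3 ≤ p * e)
    (x : Fin (n + 1) → k) :
    (∀ j : Fin (n + 1),
        eval x (pderiv j
          (∑ i : Fin n, X i.castSucc * X i.succ ^ (p * e - 1) :
            MvPolynomial (Fin (n + 1)) k)) = 0) ↔
      ∀ i : Fin (n + 1), i ≠ 0 → x i = 0 :=
  eval_pderiv_chainPoly_eq_zero_iff x (by omega)

/-- For `F = Σ_{i=1}^{n} x_{i-1}·x_i^{pe-1}` over an algebraically closed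
field of characteristic `p > 0` with `p·e ≥ 3`, all partial derivatives of `F` vanish at
a point `x ∈ k^{n+1}` if and only if `x_1 = ⋯ = x_n = 0`: the zero locus of `dF` is
precisely the line `{x_1 = ⋯ = x_n = 0}` through the origin. -/
theorem stmt_8 {k : Type*} [Field k] [IsAlgClosed k] (p : ℕ) [CharP k p] (hp : 0 < p)
    (n e : ℕ) (hn : 1 ≤ n) (he : 1 ≤ e) (hpe : 3 ≤ p * e)
    (x : Fin (n + 1) → k) :
    (∀ j : Fin (n + 1),
        eval x (pderiv j
          (∑ i : Fin n, X i.castSucc * X i.succ ^ (p * e - 1) :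
            MvPolynomial (Fin (n + 1)) k)) = 0) ↔
      ∀ i : Fin (n + 1), i ≠ 0 → x i = 0 :=
  stmt_8_general p n e hpe x
end

section
/- Let k be an algebraically closed field of characteristic p > 0, let n ≥ 3, and let a, b ∈ k[x_0,…,x_n] be relatively prime polynomials (every common divisor of a and b is a unit). Suppose that b·∂a/∂x_i = a·∂b/∂x_i for every i with 3 ≤ i ≤ n. Then ∂a/∂x_i = 0 and ∂b/∂x_i = 0 for all 3 ≤ i ≤ n, and consequently both a and b belong to the k-subalgebra of k[x_0,…,x_n] generated by x_0, x_1, x_2 and the p-th powers x_i^p for 3 ≤ i ≤ n. -/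
/-!
If `b ∂a = a ∂b` with `a, b` relatively prime, then `a ∣ ∂a`; since a nonzero partial
derivative has smaller total degree, this forces `∂a = 0`, and likewise `∂b = 0`.
A polynomial with `∂f/∂x_j = 0` in characteristic `p` only involves exponents of `x_j`
divisible by `p`, so each of its monomials lies in the subalgebra.
-/

open MvPolynomial

noncomputable def xAlg (k : Type*) [CommRing k] (n p : ℕ) :
    Subalgebra k (MvPolynomial (Fin (n + 1)) k) :=
  Algebra.adjoin k
    {P | (∃ i : Fin (n + 1), (i : ℕ) < 3 ∧ P = X i) ∨
         (∃ i : Fin (n + 1), 3 ≤ (i : ℕ) ∧ P = X i ^ p)}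

theorem MvPolynomial.totalDegree_pderiv_lt {σ R : Type*} [CommSemiring R] {f : MvPolynomial σ R}
    {i : σ} (h : pderiv i f ≠ 0) : (pderiv i f).totalDegree < f.totalDegree := by
  classical
  obtain ⟨m, hm, hdeg⟩ := Finset.exists_mem_eq_sup _ (support_nonempty.mpr h)
    fun s => s.sum fun _ e => e
  have hshift : m + Finsupp.single i 1 ∈ f.support := by
    rw [mem_support_iff, coeff_pderiv] at hm
    exact mem_support_iff.mpr (left_ne_zero_of_mul hm)
  have hle := le_totalDegree hshift
  rw [Finsupp.sum_add_index' (fun _ => rfl) (fun _ _ _ => rfl),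
    Finsupp.sum_single_index rfl] at hle
  rw [totalDegree, hdeg]
  omega

theorem MvPolynomial.pderiv_eq_zero_of_dvd_pderiv {σ R : Type*} [CommRing R] [IsDomain R]
    {f : MvPolynomial σ R} {i : σ} (h : f ∣ pderiv i f) : pderiv i f = 0 := by
  by_contra hne
  exact (totalDegree_le_of_dvd_of_isDomain h hne).not_gt (totalDegree_pderiv_lt hne)

theorem MvPolynomial.dvd_of_pderiv_eq_zero_of_mem_support {σ R : Type*} [CommRing R]
    [IsDomain R] (p : ℕ) [CharP R p] {f : MvPolynomial σ R} {i : σ} (hf : pderiv i f = 0)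
    {d : σ →₀ ℕ} (hd : d ∈ f.support) : p ∣ d i := by
  classical
  rcases Nat.eq_zero_or_pos (d i) with h0 | hpos
  · simp [h0]
  obtain ⟨m, rfl⟩ : ∃ m, d = m + Finsupp.single i 1 :=
    ⟨d - Finsupp.single i 1, (tsub_add_cancel_of_le (Finsupp.single_le_iff.mpr hpos)).symm⟩
  have hcoeff := coeff_pderiv (i := i) f m
  rw [hf, coeff_zero, eq_comm, mul_eq_zero, or_iff_right (mem_support_iff.mp hd)] at hcoeff
  rw [← CharP.cast_eq_zero_iff R p]
  simpa using hcoeff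

theorem IsRelPrime.pderiv_eq_zero {σ R : Type*} [CommRing R] [IsDomain R]
    [UniqueFactorizationMonoid R]
    {a b : MvPolynomial σ R} (hab : IsRelPrime a b) {i : σ}
    (h : b * pderiv i a = a * pderiv i b) : pderiv i a = 0 ∧ pderiv i b = 0 :=
  ⟨pderiv_eq_zero_of_dvd_pderiv <| hab.dvd_of_dvd_mul_left ⟨_, h⟩,
    pderiv_eq_zero_of_dvd_pderiv <| hab.symm.dvd_of_dvd_mul_left ⟨_, h.symm⟩⟩

theorem mem_xAlg_of_pderiv_eq_zero {k : Type*} [CommRing k] [IsDomain k] (p : ℕ) [CharP k p]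
    {n : ℕ} {f : MvPolynomial (Fin (n + 1)) k}
    (hf : ∀ i : Fin (n + 1), 3 ≤ (i : ℕ) → pderiv i f = 0) : f ∈ xAlg k n p := by
  rw [← support_sum_monomial_coeff f]
  refine Subalgebra.sum_mem _ fun d hd => ?_
  rw [monomial_eq]
  refine Subalgebra.mul_mem _ (Subalgebra.algebraMap_mem _ _)
    (Subalgebra.prod_mem _ fun j _ => ?_)
  show X j ^ d j ∈ xAlg k n p
  rcases lt_or_ge (j : ℕ) 3 with hj | hj
  · exact Subalgebra.pow_mem _ (Algebra.subset_adjoin <| .inl ⟨j, hj, rfl⟩) _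
  · obtain ⟨e, he⟩ := dvd_of_pderiv_eq_zero_of_mem_support p (hf j hj) hd
    rw [he, pow_mul]
    exact Subalgebra.pow_mem _ (Algebra.subset_adjoin <| .inr ⟨j, hj, rfl⟩) _

theorem stmt_9_general {k : Type*} [Field k] (p : ℕ) [CharP k p]
    (n : ℕ)
    (a b : MvPolynomial (Fin (n + 1)) k)
    (hcop : IsRelPrime a b)
    (h : ∀ i : Fin (n + 1), 3 ≤ (i : ℕ) → b * pderiv i a = a * pderiv i b) :
    (∀ i : Fin (n + 1), 3 ≤ (i : ℕ) → pderiv i a = 0 ∧ pderiv i b = 0) ∧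
    a ∈ xAlg k n p ∧ b ∈ xAlg k n p := by
  have hderiv i hi := hcop.pderiv_eq_zero (h i hi)
  exact ⟨hderiv, mem_xAlg_of_pderiv_eq_zero p fun i hi => (hderiv i hi).1,
    mem_xAlg_of_pderiv_eq_zero p fun i hi => (hderiv i hi).2⟩

/-- Over an algebraically closed field of characteristic `p > 0`, if `a` and
`b` are relatively prime polynomials in `k[x_0, …, x_n]` (`n ≥ 3`) satisfying
`b·∂a/∂x_i = a·∂b/∂x_i` for all `3 ≤ i ≤ n`, then `∂a/∂x_i = ∂b/∂x_i = 0` for all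
`3 ≤ i ≤ n`, and `a, b` lie in the subalgebra generated by `x_0, x_1, x_2` and the `p`-th
powers `x_i^p`, `3 ≤ i ≤ n`. -/
theorem stmt_9 {k : Type*} [Field k] [IsAlgClosed k] (p : ℕ) [CharP k p] (hp : 0 < p)
    (n : ℕ) (hn : 3 ≤ n)
    (a b : MvPolynomial (Fin (n + 1)) k)
    (hcop : IsRelPrime a b)
    (h : ∀ i : Fin (n + 1), 3 ≤ (i : ℕ) → b * pderiv i a = a * pderiv i b) :
    (∀ i : Fin (n + 1), 3 ≤ (i : ℕ) → pderiv i a = 0 ∧ pderiv i b = 0) ∧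
    a ∈ xAlg k n p ∧ b ∈ xAlg k n p :=
  stmt_9_general p n a b hcop h
end
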